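/- arXiv:1609.05998 — 9 statements merged into one kernel-verified Lean document; each statement's English description precedes it below -/
import Mathlib

section
/- If μ is a probability measure on ℝ^d with finite second moment, then μ is a probabilistic frame (i.e., there exist 0 < A ≤ B < ∞ with A‖x‖² ≤ ∫⟨x,y⟩² dμ(y) ≤ B‖x‖² for all x) if and only if the linear span of the support of μ is all of ℝ^d. -/
open MeasureTheory
open scoped RealInnerProductSpace

/-- The support of a measure: points all of whose open neighborhoods have positive measure. -/
def measureSupport {E : Type*} [TopologicalSpace E] [MeasurableSpace E]
    (μ : MeasureTheory.Measure E) : Set E :=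
  {x | ∀ U : Set E, IsOpen U → x ∈ U → 0 < μ U}

/-! The quadratic form `q x = ∫ ⟪x, y⟫² dμ(y)` is bounded by `(∫ ‖y‖² dμ) ‖x‖²` (Cauchy–Schwarz),
and it vanishes exactly on the orthogonal complement of the span of the support: `y ↦ ⟪x, y⟫` is
continuous and the support carries all of `μ`. So a lower frame bound forces that complement to be
trivial. Conversely, if the support spans, `q` is continuous and positive on the compact unit
sphere, and by `2`-homogeneity its minimum there is a lower frame bound. -/

lemma measureSupport_eq_support {X : Type*} [TopologicalSpace X] [MeasurableSpace X]
    (μ : Measure X) : measureSupport μ = μ.support := by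
  ext x
  simp only [measureSupport, Measure.support_eq_forall_isOpen, Set.mem_ofPred_eq]
  exact forall_congr' fun _ => imp.swap

lemma Submodule.mem_orthogonal_span_iff {E : Type*} [NormedAddCommGroup E]
    [InnerProductSpace ℝ E] {s : Set E} {x : E} :
    x ∈ (span ℝ s)ᗮ ↔ ∀ y ∈ s, ⟪y, x⟫ = 0 := by
  rw [← span_singleton_le_iff_mem, ← IsOrtho, isOrtho_span]
  simp [real_inner_comm]

lemma MeasureTheory.Measure.ae_iff_forall_mem_support {X : Type*} [TopologicalSpace X]
    [MeasurableSpace X] [HereditarilyLindelofSpace X] {μ : Measure X} {p : X → Prop}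
    (hp : IsClosed {x | p x}) :
    (∀ᵐ x ∂μ, p x) ↔ ∀ x ∈ μ.support, p x :=
  ⟨fun h _ hx => support_subset_of_isClosed hp h hx,
    fun h => Filter.mem_of_superset support_mem_ae h⟩

lemma real_inner_sq_le_norm_sq_mul_norm_sq {E : Type*} [NormedAddCommGroup E]
    [InnerProductSpace ℝ E] (x y : E) : ⟪x, y⟫ ^ 2 ≤ ‖x‖ ^ 2 * ‖y‖ ^ 2 := by
  rw [← mul_pow, ← sq_abs]
  exact pow_le_pow_left₀ (abs_nonneg _) (abs_real_inner_le_norm x y) 2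

lemma exists_pos_mul_norm_sq_le_of_homogeneous {E : Type*} [NormedAddCommGroup E]
    [NormedSpace ℝ E] [FiniteDimensional ℝ E] {g : E → ℝ} (hg : Continuous g)
    (hsmul : ∀ (c : ℝ) x, g (c • x) = c ^ 2 * g x) (hpos : ∀ x ≠ 0, 0 < g x) :
    ∃ A > 0, ∀ x, A * ‖x‖ ^ 2 ≤ g x := by
  obtain ⟨A, hA, hAsphere⟩ := (isCompact_sphere (0 : E) 1).exists_forall_le' hg.continuousOn
    fun x hx => hpos x (ne_zero_of_mem_unit_sphere ⟨x, hx⟩)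
  refine ⟨A, hA, fun x => ?_⟩
  rcases eq_or_ne x 0 with rfl | hx
  · simpa using (hsmul 0 0).ge
  have hunit : ‖x‖⁻¹ • x ∈ Metric.sphere (0 : E) 1 := by
    simp [norm_smul, norm_ne_zero_iff.2 hx]
  calc A * ‖x‖ ^ 2 ≤ g (‖x‖⁻¹ • x) * ‖x‖ ^ 2 := by gcongr; exact hAsphere _ hunit
    _ = g x := by rw [hsmul, inv_pow]; field_simp

section FrameQuadraticForm

variable {E : Type*} [NormedAddCommGroup E] [InnerProductSpace ℝ E] [MeasurableSpace E]
  [BorelSpace E] {μ : Measure E}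

lemma integrable_real_inner_sq (h2 : Integrable (fun y : E => ‖y‖ ^ 2) μ) (x : E) :
    Integrable (fun y => ⟪x, y⟫ ^ 2) μ := by
  refine (h2.const_mul (‖x‖ ^ 2)).mono' (by fun_prop) (ae_of_all _ fun y => ?_)
  rw [Real.norm_of_nonneg (sq_nonneg _)]
  exact real_inner_sq_le_norm_sq_mul_norm_sq x y

lemma integral_real_inner_sq_le (h2 : Integrable (fun y : E => ‖y‖ ^ 2) μ) (x : E) :
    ∫ y, ⟪x, y⟫ ^ 2 ∂μ ≤ (∫ y, ‖y‖ ^ 2 ∂μ) * ‖x‖ ^ 2 := by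
  rw [mul_comm, ← integral_const_mul]
  exact integral_mono (integrable_real_inner_sq h2 x) (h2.const_mul _)
    (real_inner_sq_le_norm_sq_mul_norm_sq x)

omit [BorelSpace E] in
lemma integral_real_inner_sq_smul (c : ℝ) (x : E) :
    ∫ y, ⟪c • x, y⟫ ^ 2 ∂μ = c ^ 2 * ∫ y, ⟪x, y⟫ ^ 2 ∂μ := by
  simp only [real_inner_smul_left, mul_pow, integral_const_mul]

lemma continuous_integral_real_inner_sq (h2 : Integrable (fun y : E => ‖y‖ ^ 2) μ) :
    Continuous fun x : E => ∫ y, ⟪x, y⟫ ^ 2 ∂μ := by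
  refine continuous_iff_continuousAt.2 fun x₀ => continuousAt_of_dominated
    (bound := fun y => (‖x₀‖ + 1) ^ 2 * ‖y‖ ^ 2) (Filter.Eventually.of_forall fun x => by fun_prop)
    ?_ (h2.const_mul _) (ae_of_all _ fun y => by fun_prop)
  filter_upwards [Metric.closedBall_mem_nhds x₀ one_pos] with x hx
  refine ae_of_all _ fun y => ?_
  rw [Real.norm_of_nonneg (sq_nonneg _)]
  calc ⟪x, y⟫ ^ 2 ≤ ‖x‖ ^ 2 * ‖y‖ ^ 2 := real_inner_sq_le_norm_sq_mul_norm_sq x y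
    _ ≤ (‖x₀‖ + 1) ^ 2 * ‖y‖ ^ 2 := by gcongr; exact norm_le_of_mem_closedBall hx

lemma integral_real_inner_sq_eq_zero_iff [HereditarilyLindelofSpace E]
    (h2 : Integrable (fun y : E => ‖y‖ ^ 2) μ) (x : E) :
    ∫ y, ⟪x, y⟫ ^ 2 ∂μ = 0 ↔ x ∈ (Submodule.span ℝ μ.support)ᗮ := by
  rw [integral_eq_zero_iff_of_nonneg (fun y => sq_nonneg _) (integrable_real_inner_sq h2 x),
    Submodule.mem_orthogonal_span_iff, ← Measure.ae_iff_forall_mem_support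
      (isClosed_eq (by fun_prop) continuous_const)]
  simp only [Filter.EventuallyEq, Pi.zero_apply, pow_eq_zero_iff two_ne_zero, real_inner_comm x]

end FrameQuadraticForm

theorem stmt0_general {d : ℕ} (μ : Measure (EuclideanSpace ℝ (Fin d)))
    (h2 : Integrable (fun x : EuclideanSpace ℝ (Fin d) => ‖x‖ ^ 2) μ) :
    (∃ A B : ℝ, 0 < A ∧ A ≤ B ∧
      ∀ x : EuclideanSpace ℝ (Fin d),
        A * ‖x‖ ^ 2 ≤ (∫ y, ⟪x, y⟫ ^ 2 ∂μ) ∧ (∫ y, ⟪x, y⟫ ^ 2 ∂μ) ≤ B * ‖x‖ ^ 2) ↔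
    Submodule.span ℝ (measureSupport μ) = ⊤ := by
  rw [measureSupport_eq_support, ← Submodule.orthogonal_eq_bot_iff]
  constructor
  · rintro ⟨A, _, hA, _, hframe⟩
    refine (Submodule.eq_bot_iff _).2 fun x hx => ?_
    have hlower := (hframe x).1
    rw [(integral_real_inner_sq_eq_zero_iff h2 x).2 hx] at hlower
    simpa using nonpos_of_mul_nonpos_right hlower hA
  · intro hperp
    have hpos : ∀ x ≠ 0, 0 < ∫ y, ⟪x, y⟫ ^ 2 ∂μ := fun x hx =>
      (integral_nonneg fun y => sq_nonneg _).lt_of_ne' fun h0 =>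
        hx <| by simpa [hperp] using (integral_real_inner_sq_eq_zero_iff h2 x).1 h0
    obtain ⟨A, hA, hlower⟩ := exists_pos_mul_norm_sq_le_of_homogeneous
      (continuous_integral_real_inner_sq h2) integral_real_inner_sq_smul hpos
    refine ⟨A, max A (∫ y, ‖y‖ ^ 2 ∂μ), hA, le_max_left _ _, fun x => ⟨hlower x, ?_⟩⟩
    calc ∫ y, ⟪x, y⟫ ^ 2 ∂μ ≤ (∫ y, ‖y‖ ^ 2 ∂μ) * ‖x‖ ^ 2 := integral_real_inner_sq_le h2 x
      _ ≤ max A (∫ y, ‖y‖ ^ 2 ∂μ) * ‖x‖ ^ 2 := by gcongr; exact le_max_right _ _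

/-- A probability measure on ℝ^d with finite second moment is a probabilistic frame
(there exist frame bounds 0 < A ≤ B < ∞) iff the linear span of its support is all of ℝ^d. -/
theorem stmt0 {d : ℕ} (μ : Measure (EuclideanSpace ℝ (Fin d)))
    [IsProbabilityMeasure μ]
    (h2 : Integrable (fun x : EuclideanSpace ℝ (Fin d) => ‖x‖ ^ 2) μ) :
    (∃ A B : ℝ, 0 < A ∧ A ≤ B ∧
      ∀ x : EuclideanSpace ℝ (Fin d),
        A * ‖x‖ ^ 2 ≤ (∫ y, ⟪x, y⟫ ^ 2 ∂μ) ∧ (∫ y, ⟪x, y⟫ ^ 2 ∂μ) ≤ B * ‖x‖ ^ 2) ↔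
    Submodule.span ℝ (measureSupport μ) = ⊤ :=
  stmt0_general μ h2
end

section
/- Let μ be a probabilistic frame for ℝ^d with frame operator S_μ and let h : ℝ^d → ℝ^d be square-integrable with respect to μ. Define ψ_h(x) = S_μ^{-1} x + h(x) − ∫ ⟨S_μ^{-1}x, y⟩ h(y) dμ(y). Then the pushforward (ψ_h)_# μ is a transport dual of μ, witnessed by the coupling γ = (id, ψ_h)_# μ, i.e., ∬ x y^T dγ(x,y) = I. -/
/-!
Write `S = ∫ x xᵀ dμ` and `C = ∫ h(y) yᵀ dμ(y)`. The correction term of `ψ_h` is linear in `x`,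
namely `x ↦ C S⁻¹ x`, and for every matrix `T` one has `∫ x (T x)ᵀ dμ = S Tᵀ`. Since `S` is
symmetric, `∫ x ψ_h(x)ᵀ dμ = S S⁻¹ + Cᵀ - S S⁻¹ Cᵀ = I`. The lower frame bound makes `S` positive
definite, hence invertible.
-/

open MeasureTheory Matrix
open scoped RealInnerProductSpace

variable {Ω ι κ : Type*} [MeasurableSpace Ω] {μ : Measure Ω}

noncomputable def crossMoment (μ : Measure Ω) (f : Ω → EuclideanSpace ℝ ι)
    (g : Ω → EuclideanSpace ℝ κ) : Matrix ι κ ℝ :=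
  fun i j => ∫ x, f x i * g x j ∂μ

noncomputable abbrev frameOperator (μ : Measure (EuclideanSpace ℝ ι)) : Matrix ι ι ℝ :=
  crossMoment μ id id

theorem crossMoment_comm (f : Ω → EuclideanSpace ℝ ι) (g : Ω → EuclideanSpace ℝ κ) :
    crossMoment μ g f = (crossMoment μ f g)ᵀ := by
  ext i j
  simp only [crossMoment, transpose_apply, mul_comm]

variable [Fintype ι] [Fintype κ] {f : Ω → EuclideanSpace ℝ ι} {g g₁ g₂ : Ω → EuclideanSpace ℝ κ}

theorem EuclideanSpace.real_inner_eq_sum (v w : EuclideanSpace ℝ ι) : ⟪v, w⟫ = ∑ i, v i * w i := by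
  simp [PiLp.inner_apply, mul_comm]

theorem integrable_coord_mul_coord (hf : MemLp f 2 μ) (hg : MemLp g 2 μ) (i : ι) (j : κ) :
    Integrable (fun x => f x i * g x j) μ :=
  (hf.eval_piLp i).integrable_mul (hg.eval_piLp j)

theorem crossMoment_add_right (hf : MemLp f 2 μ) (hg₁ : MemLp g₁ 2 μ) (hg₂ : MemLp g₂ 2 μ) :
    crossMoment μ f (fun x => g₁ x + g₂ x) = crossMoment μ f g₁ + crossMoment μ f g₂ := by
  ext i j
  simp only [crossMoment, PiLp.add_apply, mul_add, Matrix.add_apply]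
  exact integral_add (integrable_coord_mul_coord hf hg₁ i j) (integrable_coord_mul_coord hf hg₂ i j)

theorem crossMoment_sub_right (hf : MemLp f 2 μ) (hg₁ : MemLp g₁ 2 μ) (hg₂ : MemLp g₂ 2 μ) :
    crossMoment μ f (fun x => g₁ x - g₂ x) = crossMoment μ f g₁ - crossMoment μ f g₂ := by
  ext i j
  simp only [crossMoment, PiLp.sub_apply, mul_sub, Matrix.sub_apply]
  exact integral_sub (integrable_coord_mul_coord hf hg₁ i j) (integrable_coord_mul_coord hf hg₂ i j)

theorem crossMoment_toEuclideanLin_right {κ' : Type*} [Fintype κ'] [DecidableEq κ]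
    (hf : MemLp f 2 μ) (hg : MemLp g 2 μ) (T : Matrix κ' κ ℝ) :
    crossMoment μ f (fun x => toEuclideanLin T (g x)) = crossMoment μ f g * Tᵀ := by
  ext i j
  have hexpand : ∀ x, f x i * toEuclideanLin T (g x) j = ∑ k, T j k * (f x i * g x k) := by
    intro x
    simp only [toEuclideanLin, toLpLin_apply, PiLp.toLp_apply, mulVec, dotProduct, Finset.mul_sum]
    exact Finset.sum_congr rfl fun k _ => by ring
  simp only [crossMoment, hexpand, mul_apply, transpose_apply]
  rw [integral_finsetSum _ fun k _ => (integrable_coord_mul_coord hf hg i k).const_mul _]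
  exact Finset.sum_congr rfl fun k _ => by rw [integral_const_mul, mul_comm]

theorem dotProduct_crossMoment_mulVec (hf : MemLp f 2 μ) (hg : MemLp g 2 μ) (v : ι → ℝ)
    (w : κ → ℝ) :
    v ⬝ᵥ crossMoment μ f g *ᵥ w = ∫ x, ⟪WithLp.toLp 2 v, f x⟫ * ⟪WithLp.toLp 2 w, g x⟫ ∂μ := by
  have hexpand : ∀ x, ⟪WithLp.toLp 2 v, f x⟫ * ⟪WithLp.toLp 2 w, g x⟫
      = ∑ i, ∑ j, v i * w j * (f x i * g x j) := by
    intro x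
    simp only [EuclideanSpace.real_inner_eq_sum, Finset.sum_mul_sum]
    exact Finset.sum_congr rfl fun i _ => Finset.sum_congr rfl fun j _ => by ring
  simp only [hexpand]
  rw [integral_finsetSum _ fun i _ => integrable_finsetSum _ fun j _ =>
    (integrable_coord_mul_coord hf hg i j).const_mul _]
  refine Finset.sum_congr rfl fun i _ => ?_
  rw [integral_finsetSum _ fun j _ => (integrable_coord_mul_coord hf hg i j).const_mul _,
    mulVec, dotProduct, Finset.mul_sum]
  exact Finset.sum_congr rfl fun j _ => by rw [integral_const_mul, crossMoment]; ring

theorem posDef_crossMoment_self (hf : MemLp f 2 μ) {A : ℝ} (hA : 0 < A)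
    (hframe : ∀ v, A * ‖v‖ ^ 2 ≤ ∫ x, ⟪v, f x⟫ ^ 2 ∂μ) : (crossMoment μ f f).PosDef := by
  refine .of_dotProduct_mulVec_pos ?_ fun v hv => ?_
  · exact (crossMoment_comm f f).symm
  · have hv' : WithLp.toLp 2 v ≠ 0 := by simpa using hv
    calc 0 < A * ‖WithLp.toLp 2 v‖ ^ 2 := by positivity
      _ ≤ _ := hframe _
      _ = _ := by simp only [star_trivial, dotProduct_crossMoment_mulVec hf hf, sq]

theorem integral_inner_smul_eq_toEuclideanLin [DecidableEq ι] (hf : MemLp f 2 μ)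
    (hg : MemLp g 2 μ) (v : EuclideanSpace ℝ ι) :
    ∫ x, ⟪v, f x⟫ • g x ∂μ = toEuclideanLin (crossMoment μ g f) v := by
  have hint : ∀ j, Integrable (fun x => ⟪v, f x⟫ * g x j) μ := fun j =>
    (hf.const_inner v).integrable_mul (hg.eval_piLp j)
  ext j
  have hexpand : ∀ x, ⟪v, f x⟫ * g x j = ∑ k, v k * (g x j * f x k) := by
    intro x
    simp only [EuclideanSpace.real_inner_eq_sum, Finset.sum_mul]
    exact Finset.sum_congr rfl fun k _ => by ring
  rw [eval_integral_piLp hint]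
  simp only [PiLp.smul_apply, smul_eq_mul, hexpand]
  rw [integral_finsetSum _ fun k _ => (integrable_coord_mul_coord hg hf j k).const_mul _]
  simp only [toEuclideanLin, toLpLin_apply, PiLp.toLp_apply, mulVec, dotProduct, crossMoment]
  exact Finset.sum_congr rfl fun k _ => by rw [integral_const_mul, mul_comm]

section TransportDual

variable [DecidableEq ι] (μ : Measure (EuclideanSpace ℝ ι))

noncomputable def transportDualMap (h : EuclideanSpace ℝ ι → EuclideanSpace ℝ ι)
    (x : EuclideanSpace ℝ ι) : EuclideanSpace ℝ ι :=
  toEuclideanLin (frameOperator μ)⁻¹ x + h x -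
    ∫ y, ⟪toEuclideanLin (frameOperator μ)⁻¹ x, y⟫ • h y ∂μ

variable {μ}

theorem frameOperator_mul_transpose_inv (hS : IsUnit (frameOperator μ).det) :
    frameOperator μ * (frameOperator μ)⁻¹ᵀ = 1 := by
  rw [transpose_nonsing_inv, ← crossMoment_comm, mul_nonsing_inv _ hS]

variable {h : EuclideanSpace ℝ ι → EuclideanSpace ℝ ι}

theorem transportDualMap_eq (hX : MemLp id 2 μ) (hh : MemLp h 2 μ) :
    transportDualMap μ h = fun x => toEuclideanLin (frameOperator μ)⁻¹ x + h x -
      toEuclideanLin (crossMoment μ h id) (toEuclideanLin (frameOperator μ)⁻¹ x) := by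
  funext x
  rw [transportDualMap, ← integral_inner_smul_eq_toEuclideanLin hX hh]
  rfl

theorem memLp_transportDualMap (hX : MemLp id 2 μ) (hh : MemLp h 2 μ) :
    MemLp (transportDualMap μ h) 2 μ := by
  rw [transportDualMap_eq hX hh]
  have hT := hX.continuousLinearMap_comp (toEuclideanLin (frameOperator μ)⁻¹).toContinuousLinearMap
  exact (hT.add hh).sub
    (hT.continuousLinearMap_comp (toEuclideanLin (crossMoment μ h id)).toContinuousLinearMap)

theorem crossMoment_id_transportDualMap (hX : MemLp id 2 μ)
    (hS : IsUnit (frameOperator μ).det) (hh : MemLp h 2 μ) :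
    crossMoment μ id (transportDualMap μ h) = 1 := by
  set T := toEuclideanLin (frameOperator μ)⁻¹
  set C := crossMoment μ h id
  have hT : MemLp (fun x => T x) 2 μ := hX.continuousLinearMap_comp T.toContinuousLinearMap
  have hTh : MemLp (fun x => T x + h x) 2 μ := hT.add hh
  have hCT : MemLp (fun x => toEuclideanLin C (T x)) 2 μ :=
    hT.continuousLinearMap_comp (toEuclideanLin C).toContinuousLinearMap
  have hST : crossMoment μ id (fun x => T x) = 1 :=
    (crossMoment_toEuclideanLin_right hX hX _).trans (frameOperator_mul_transpose_inv hS)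
  rw [transportDualMap_eq hX hh, crossMoment_sub_right hX hTh hCT, crossMoment_add_right hX hT hh,
    crossMoment_toEuclideanLin_right hX hT, hST, ← crossMoment_comm, Matrix.one_mul,
    add_sub_cancel_right]

end TransportDual

theorem stmt4_general {d : ℕ} (μ : Measure (EuclideanSpace ℝ (Fin d)))
    (h2 : Integrable (fun x : EuclideanSpace ℝ (Fin d) => ‖x‖ ^ 2) μ)
    (hframe : ∃ A B : ℝ, 0 < A ∧ A ≤ B ∧
      ∀ x : EuclideanSpace ℝ (Fin d),
        A * ‖x‖ ^ 2 ≤ (∫ y, ⟪x, y⟫ ^ 2 ∂μ) ∧ (∫ y, ⟪x, y⟫ ^ 2 ∂μ) ≤ B * ‖x‖ ^ 2)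
    (S : Matrix (Fin d) (Fin d) ℝ) (hS : S = fun i j => ∫ x, x i * x j ∂μ)
    (h : EuclideanSpace ℝ (Fin d) → EuclideanSpace ℝ (Fin d))
    (hmeas : AEStronglyMeasurable h μ)
    (hL2 : Integrable (fun x => ‖h x‖ ^ 2) μ)
    (ψ : EuclideanSpace ℝ (Fin d) → EuclideanSpace ℝ (Fin d))
    (hψ : ψ = fun x => Matrix.toEuclideanLin S⁻¹ x + h x -
      ∫ y, (⟪Matrix.toEuclideanLin S⁻¹ x, y⟫) • h y ∂μ)
    (γ : Measure (EuclideanSpace ℝ (Fin d) × EuclideanSpace ℝ (Fin d)))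
    (hγ : γ = μ.map (fun x => (x, ψ x))) :
    γ.map Prod.fst = μ ∧
    γ.map Prod.snd = μ.map ψ ∧
    ∀ i j : Fin d, (∫ p : EuclideanSpace ℝ (Fin d) × EuclideanSpace ℝ (Fin d),
      p.1 i * p.2 j ∂γ) = (1 : Matrix (Fin d) (Fin d) ℝ) i j := by
  have hX : MemLp id 2 μ := (memLp_two_iff_integrable_sq_norm aestronglyMeasurable_id).2 h2
  have hh : MemLp h 2 μ := (memLp_two_iff_integrable_sq_norm hmeas).2 hL2
  obtain ⟨A, _, hA, _, hbounds⟩ := hframe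
  have hSdet : IsUnit (frameOperator μ).det := (isUnit_iff_isUnit_det _).1
    (posDef_crossMoment_self hX hA fun v => (hbounds v).1).isUnit
  have hψdual : ψ = transportDualMap μ h := by
    subst hψ hS
    rfl
  have hpair : AEMeasurable (fun x => (x, ψ x)) μ :=
    aemeasurable_id.prodMk (hψdual ▸ memLp_transportDualMap hX hh).aestronglyMeasurable.aemeasurable
  refine ⟨?_, ?_, fun i j => ?_⟩
  · rw [hγ, AEMeasurable.map_map_of_aemeasurable measurable_fst.aemeasurable hpair]
    exact Measure.map_id
  · rw [hγ, AEMeasurable.map_map_of_aemeasurable measurable_snd.aemeasurable hpair]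
    rfl
  · rw [hγ, integral_map hpair (by fun_prop : Continuous fun p : EuclideanSpace ℝ (Fin d) ×
      EuclideanSpace ℝ (Fin d) => p.1 i * p.2 j).aestronglyMeasurable]
    rw [← crossMoment_id_transportDualMap hX hSdet hh, ← hψdual]
    rfl

/-- For a probabilistic frame `μ` and `h ∈ L²(μ)`, the pushforward of `μ` by
`ψ_h(x) = S_μ⁻¹x + h(x) − ∫ ⟨S_μ⁻¹x, y⟩ h(y) dμ(y)` is a transport dual of `μ`,
witnessed by the coupling `γ = (id, ψ_h)_# μ`. -/
theorem stmt4 {d : ℕ} (μ : Measure (EuclideanSpace ℝ (Fin d))) [IsProbabilityMeasure μ]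
    (h2 : Integrable (fun x : EuclideanSpace ℝ (Fin d) => ‖x‖ ^ 2) μ)
    (hframe : ∃ A B : ℝ, 0 < A ∧ A ≤ B ∧
      ∀ x : EuclideanSpace ℝ (Fin d),
        A * ‖x‖ ^ 2 ≤ (∫ y, ⟪x, y⟫ ^ 2 ∂μ) ∧ (∫ y, ⟪x, y⟫ ^ 2 ∂μ) ≤ B * ‖x‖ ^ 2)
    (S : Matrix (Fin d) (Fin d) ℝ) (hS : S = fun i j => ∫ x, x i * x j ∂μ)
    (h : EuclideanSpace ℝ (Fin d) → EuclideanSpace ℝ (Fin d))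
    (hmeas : AEStronglyMeasurable h μ)
    (hL2 : Integrable (fun x => ‖h x‖ ^ 2) μ)
    (ψ : EuclideanSpace ℝ (Fin d) → EuclideanSpace ℝ (Fin d))
    (hψ : ψ = fun x => Matrix.toEuclideanLin S⁻¹ x + h x -
      ∫ y, (⟪Matrix.toEuclideanLin S⁻¹ x, y⟫) • h y ∂μ)
    (γ : Measure (EuclideanSpace ℝ (Fin d) × EuclideanSpace ℝ (Fin d)))
    (hγ : γ = μ.map (fun x => (x, ψ x))) :
    γ.map Prod.fst = μ ∧
    γ.map Prod.snd = μ.map ψ ∧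
    ∀ i j : Fin d, (∫ p : EuclideanSpace ℝ (Fin d) × EuclideanSpace ℝ (Fin d),
      p.1 i * p.2 j ∂γ) = (1 : Matrix (Fin d) (Fin d) ℝ) i j :=
  stmt4_general μ h2 hframe S hS h hmeas hL2 ψ hψ γ hγ
end

section
/- Let μ be a probabilistic frame for ℝ^d. Every transport dual ν ∈ D_μ is itself a probabilistic frame; i.e., if ν ∈ P₂(ℝ^d) and there exists a coupling γ ∈ Γ(μ,ν) with ∬ x y^T dγ(x,y) = I, then the support of ν spans ℝ^d. -/
/-!
If `v` is orthogonal to the span of the support of `ν`, then `⟪v, y⟫ = 0` for `ν`-almost every `y`,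
so `∫ ⟪v, x⟫ ⟪v, y⟫ dγ = 0`. Expanding in coordinates, the cross-moment identity `∬ x yᵀ dγ = I`
turns the same integral into `vᵀ I v = ‖v‖²`; hence `v = 0`, and the span is everything.
-/

open MeasureTheory
open scoped RealInnerProductSpace

lemma ae_mem_measureSupport {E : Type*} [TopologicalSpace E] [SecondCountableTopology E]
    [MeasurableSpace E] (ν : Measure E) : ∀ᵐ x ∂ν, x ∈ measureSupport ν := by
  refine measure_null_of_locally_null _ fun x hx => ?_
  simp only [measureSupport, Set.mem_compl_iff, Set.mem_ofPred_eq, not_forall, not_lt,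
    nonpos_iff_eq_zero] at hx
  obtain ⟨U, hU, hxU, hUν⟩ := hx
  exact ⟨U, mem_nhdsWithin_of_mem_nhds (hU.mem_nhds hxU), hUν⟩

lemma ae_inner_eq_zero_of_mem_orthogonal_span_measureSupport {E : Type*}
    [NormedAddCommGroup E] [InnerProductSpace ℝ E] [SecondCountableTopology E] [MeasurableSpace E]
    {ν : Measure E} {v : E} (hv : v ∈ (Submodule.span ℝ (measureSupport ν))ᗮ) :
    ∀ᵐ y ∂ν, ⟪v, y⟫ = 0 :=
  (ae_mem_measureSupport ν).mono fun _ hy =>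
    Submodule.inner_left_of_mem_orthogonal (Submodule.subset_span hy) hv

lemma memLp_two_of_integrable_sq_norm_map {α E : Type*} [MeasurableSpace α]
    [NormedAddCommGroup E] [MeasurableSpace E] [OpensMeasurableSpace E]
    [SecondCountableTopology E] {γ : Measure α} {f : α → E} (hf : Measurable f)
    (h : Integrable (fun x => ‖x‖ ^ 2) (γ.map f)) : MemLp f 2 γ :=
  (memLp_map_measure_iff aestronglyMeasurable_id hf.aemeasurable).1
    ((memLp_two_iff_integrable_sq_norm aestronglyMeasurable_id).2 h)

section Coupling

variable {ι : Type*} [Fintype ι]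
  {γ : Measure (EuclideanSpace ℝ ι × EuclideanSpace ℝ ι)}

lemma integrable_fst_apply_mul_snd_apply (h₁ : MemLp Prod.fst 2 γ) (h₂ : MemLp Prod.snd 2 γ)
    (i j : ι) : Integrable (fun p => p.1 i * p.2 j) γ :=
  (h₁.continuousLinearMap_comp (EuclideanSpace.proj (𝕜 := ℝ) i)).integrable_mul
    (h₂.continuousLinearMap_comp (EuclideanSpace.proj (𝕜 := ℝ) j))

lemma integral_inner_mul_inner_eq_inner [DecidableEq ι]
    (hint : ∀ i j, Integrable (fun p => p.1 i * p.2 j) γ)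
    (hdual : ∀ i j, ∫ p, p.1 i * p.2 j ∂γ = (1 : Matrix ι ι ℝ) i j) (u w : EuclideanSpace ℝ ι) :
    ∫ p, ⟪u, p.1⟫ * ⟪w, p.2⟫ ∂γ = ⟪u, w⟫ := by
  have hexpand : (fun p : EuclideanSpace ℝ ι × EuclideanSpace ℝ ι => ⟪u, p.1⟫ * ⟪w, p.2⟫) =
      fun p => ∑ i, ∑ j, u i * w j * (p.1 i * p.2 j) := by
    funext p
    simp only [PiLp.inner_apply, RCLike.inner_apply, conj_trivial, Finset.sum_mul_sum]
    exact Finset.sum_congr rfl fun i _ => Finset.sum_congr rfl fun j _ => by ring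
  rw [hexpand, integral_finsetSum _ fun i _ => integrable_finsetSum _ fun j _ =>
    (hint i j).const_mul _]
  simp_rw [integral_finsetSum _ fun j _ => (hint _ j).const_mul _, integral_const_mul, hdual,
    Matrix.one_apply, mul_ite, mul_one, mul_zero, Finset.sum_ite_eq, Finset.mem_univ, if_true,
    PiLp.inner_apply, RCLike.inner_apply, conj_trivial]
  exact Finset.sum_congr rfl fun i _ => by ring

end Coupling

theorem stmt5_general {d : ℕ} (μ ν : Measure (EuclideanSpace ℝ (Fin d)))
    (hμ2 : Integrable (fun x : EuclideanSpace ℝ (Fin d) => ‖x‖ ^ 2) μ)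
    (hν2 : Integrable (fun x : EuclideanSpace ℝ (Fin d) => ‖x‖ ^ 2) ν)
    (γ : Measure (EuclideanSpace ℝ (Fin d) × EuclideanSpace ℝ (Fin d)))
    (hγ1 : γ.map Prod.fst = μ) (hγ2 : γ.map Prod.snd = ν)
    (hdual : ∀ i j : Fin d, (∫ p : EuclideanSpace ℝ (Fin d) × EuclideanSpace ℝ (Fin d),
      p.1 i * p.2 j ∂γ) = (1 : Matrix (Fin d) (Fin d) ℝ) i j) :
    Submodule.span ℝ (measureSupport ν) = ⊤ := by
  have hint := integrable_fst_apply_mul_snd_apply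
    (memLp_two_of_integrable_sq_norm_map measurable_fst (hγ1 ▸ hμ2))
    (memLp_two_of_integrable_sq_norm_map measurable_snd (hγ2 ▸ hν2))
  rw [← Submodule.orthogonal_eq_bot_iff, Submodule.eq_bot_iff]
  intro v hv
  have hv₀ : ∀ᵐ p ∂γ, ⟪v, p.2⟫ = 0 := ae_of_ae_map measurable_snd.aemeasurable
    (hγ2 ▸ ae_inner_eq_zero_of_mem_orthogonal_span_measureSupport hv)
  refine inner_self_eq_zero (𝕜 := ℝ) |>.mp ?_
  calc ⟪v, v⟫ = ∫ p, ⟪v, p.1⟫ * ⟪v, p.2⟫ ∂γ :=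
        (integral_inner_mul_inner_eq_inner hint hdual v v).symm
    _ = 0 := integral_eq_zero_of_ae (hv₀.mono fun p hp => by simp [hp])

/-- Every transport dual of a probabilistic frame is itself a probabilistic frame: if
`ν ∈ P₂(ℝ^d)` admits a coupling `γ` with `μ` satisfying `∬ x yᵀ dγ = I`, then the
support of `ν` spans `ℝ^d`. -/
theorem stmt5 {d : ℕ} (μ ν : Measure (EuclideanSpace ℝ (Fin d)))
    [IsProbabilityMeasure μ] [IsProbabilityMeasure ν]
    (hμ2 : Integrable (fun x : EuclideanSpace ℝ (Fin d) => ‖x‖ ^ 2) μ)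
    (hν2 : Integrable (fun x : EuclideanSpace ℝ (Fin d) => ‖x‖ ^ 2) ν)
    (hμspan : Submodule.span ℝ (measureSupport μ) = ⊤)
    (γ : Measure (EuclideanSpace ℝ (Fin d) × EuclideanSpace ℝ (Fin d)))
    (hγ1 : γ.map Prod.fst = μ) (hγ2 : γ.map Prod.snd = ν)
    (hdual : ∀ i j : Fin d, (∫ p : EuclideanSpace ℝ (Fin d) × EuclideanSpace ℝ (Fin d),
      p.1 i * p.2 j ∂γ) = (1 : Matrix (Fin d) (Fin d) ℝ) i j) :
    Submodule.span ℝ (measureSupport ν) = ⊤ :=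
  stmt5_general μ ν hμ2 hν2 γ hγ1 hγ2 hdual
end

section
/- Let Φ, Ψ be the N×d and M×d analysis matrices of frames {φᵢ}ᵢ₌₁^N and {ψⱼ}ⱼ₌₁^M for ℝ^d, and let α ∈ ℝ^N, β ∈ ℝ^M be positive weight vectors summing to 1. There exists a nonnegative matrix A ∈ ℝ^{N×M} with row sums αᵢ, column sums βⱼ, and Φ^T A Ψ = I if and only if there is no triple (B, u, v), B ∈ ℝ^{d×d}, u ∈ ℝ^N, v ∈ ℝ^M, satisfying φᵢ^T B ψⱼ + uᵢ + vⱼ ≥ 0 for all i, j, and trace(B) + u^T α + v^T β < 0. -/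
/-!
The conditions on `A` form one linear system in the entries `A i j ≥ 0`, whose column for `(i, j)`
is `(φᵢ ψⱼᵀ, eᵢ, eⱼ)`. A dual vector of this system is a triple `(B, u, v)`, and it pairs with the
column `(i, j)` to `φᵢᵀ B ψⱼ + uᵢ + vⱼ` and with the right-hand side `(I, α, β)` to
`tr B + u ⬝ α + v ⬝ β`, so the theorem is Farkas' lemma. Farkas' lemma needs the cone spanned
by the columns to be closed, which holds because every column pairs to `2` with `(0, 1, 1)`.
-/

open Matrix

theorem LinearMap.apply_eq_dotProduct {R κ : Type*} [CommSemiring R] [Fintype κ] [DecidableEq κ]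
    (f : (κ → R) →ₗ[R] R) (x : κ → R) : f x = x ⬝ᵥ fun k => f (Pi.single k 1) := by
  conv_lhs => rw [← Finset.univ_sum_single x]
  refine (map_sum f _ _).trans (Finset.sum_congr rfl fun k _ => ?_)
  rw [← smul_eq_mul, ← map_smul, ← Pi.single_smul', smul_eq_mul, mul_one]

section Farkas

variable {ι κ : Type*} [Fintype ι] [Fintype κ]

theorem sum_smul_dotProduct {R : Type*} [CommSemiring R] (t : ι → R) (w : ι → κ → R)
    (y : κ → R) :
    (∑ i, t i • w i) ⬝ᵥ y = ∑ i, t i * (w i ⬝ᵥ y) := by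
  simp only [sum_dotProduct, smul_dotProduct, smul_eq_mul]

/- The generators lie in the open half-space `0 < · ⬝ᵥ y₀`, so the coefficients of a point of
the cone are bounded by its height `x ⬝ᵥ y₀`: below any height the cone is a compact image. -/
theorem isClosed_image_linearCombination_nonneg (w : ι → κ → ℝ) {y₀ : κ → ℝ}
    (hy₀ : ∀ i, 0 < w i ⬝ᵥ y₀) :
    IsClosed (Fintype.linearCombination ℝ w '' Set.Ici 0) := by
  set g := Fintype.linearCombination ℝ w
  refine isClosed_of_closure_subset fun x hx => ?_
  set R := x ⬝ᵥ y₀ + 1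
  have hcont : Continuous fun z : κ → ℝ => z ⬝ᵥ y₀ := continuous_id.dotProduct continuous_const
  have hg : Continuous g := LinearMap.continuous_of_finiteDimensional g
  have hgy₀ (t : ι → ℝ) : g t ⬝ᵥ y₀ = ∑ i, t i * (w i ⬝ᵥ y₀) := by
    rw [Fintype.linearCombination_apply, sum_smul_dotProduct]
  set T := {t : ι → ℝ | 0 ≤ t ∧ g t ⬝ᵥ y₀ ≤ R}
  have hT_closed : IsClosed T :=
    isClosed_Ici.inter (isClosed_le (hcont.comp hg) continuous_const)
  have hT_bdd : T ⊆ Set.Icc 0 fun i => R / (w i ⬝ᵥ y₀) := by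
    rintro t ⟨ht, htR⟩
    refine ⟨ht, fun i => (le_div_iff₀ (hy₀ i)).2 (le_trans ?_ htR)⟩
    rw [hgy₀]
    exact Finset.single_le_sum (fun j _ => mul_nonneg (ht j) (hy₀ j).le) (Finset.mem_univ i)
  have hgT_closed : IsClosed (g '' T) :=
    ((isCompact_Icc.of_isClosed_subset hT_closed hT_bdd).image hg).isClosed
  have hU : IsOpen {z : κ → ℝ | z ⬝ᵥ y₀ < R} := isOpen_lt hcont continuous_const
  have hxU : x ∈ closure ({z | z ⬝ᵥ y₀ < R} ∩ g '' Set.Ici 0) :=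
    hU.inter_closure ⟨show x ⬝ᵥ y₀ < R from lt_add_one _, hx⟩
  have hsub : {z | z ⬝ᵥ y₀ < R} ∩ g '' Set.Ici 0 ⊆ g '' T := by
    rintro _ ⟨hz, t, ht, rfl⟩
    exact ⟨t, ⟨ht, le_of_lt hz⟩, rfl⟩
  obtain ⟨t, ⟨ht, -⟩, rfl⟩ := closure_minimal hsub hgT_closed hxU
  exact ⟨t, ht, rfl⟩

theorem exists_nonneg_sum_smul_eq_iff (w : ι → κ → ℝ) (b : κ → ℝ) {y₀ : κ → ℝ}
    (hy₀ : ∀ i, 0 < w i ⬝ᵥ y₀) :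
    (∃ t : ι → ℝ, 0 ≤ t ∧ ∑ i, t i • w i = b) ↔
      ∀ y : κ → ℝ, (∀ i, 0 ≤ w i ⬝ᵥ y) → 0 ≤ b ⬝ᵥ y := by
  classical
  refine ⟨?_, fun hb => ?_⟩
  · rintro ⟨t, ht, rfl⟩ y hy
    rw [sum_smul_dotProduct]
    exact Finset.sum_nonneg fun i _ => mul_nonneg (ht i) (hy i)
  · let g := Fintype.linearCombination ℝ w
    let C : ProperCone ℝ (κ → ℝ) :=
      ⟨(PointedCone.positive ℝ (ι → ℝ)).map g, isClosed_image_linearCombination_nonneg w hy₀⟩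
    have hC (x) : x ∈ C ↔ ∃ t : ι → ℝ, 0 ≤ t ∧ ∑ i, t i • w i = x := by
      change x ∈ (PointedCone.positive ℝ (ι → ℝ)).map g ↔ _
      simp [PointedCone.mem_map, g, Fintype.linearCombination_apply]
    by_contra hbC
    obtain ⟨f, hfC, hfb⟩ := C.hyperplane_separation_point ((hC b).not.2 hbC)
    have hf (x : κ → ℝ) : f x = x ⬝ᵥ fun k => f (Pi.single k 1) :=
      (f : (κ → ℝ) →ₗ[ℝ] ℝ).apply_eq_dotProduct x
    refine hfb.not_ge ?_
    rw [hf]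
    refine hb _ fun i => ?_
    rw [← hf]
    exact hfC _ ((hC _).2 ⟨Pi.single i 1, Pi.single_nonneg.2 zero_le_one, by simp⟩)

end Farkas

section FrameCoupling

variable {d N M : ℕ}

/- The conditions `Φᵀ A Ψ = 1`, `A 1 = α`, `Aᵀ 1 = β` as one linear system in the entries of `A`,
with equations indexed by `(Fin d × Fin d) ⊕ Fin N ⊕ Fin M`; `couplingDual` packs its dual
variables. -/
def couplingColumn (Φ : Matrix (Fin N) (Fin d) ℝ) (Ψ : Matrix (Fin M) (Fin d) ℝ)
    (p : Fin N × Fin M) : (Fin d × Fin d) ⊕ Fin N ⊕ Fin M → ℝ :=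
  Sum.elim (fun kl => Φ p.1 kl.1 * Ψ p.2 kl.2) (Sum.elim (Pi.single p.1 1) (Pi.single p.2 1))

def couplingTarget (α : Fin N → ℝ) (β : Fin M → ℝ) : (Fin d × Fin d) ⊕ Fin N ⊕ Fin M → ℝ :=
  Sum.elim (fun kl => (1 : Matrix (Fin d) (Fin d) ℝ) kl.1 kl.2) (Sum.elim α β)

def couplingDual (B : Matrix (Fin d) (Fin d) ℝ) (u : Fin N → ℝ) (v : Fin M → ℝ) :
    (Fin d × Fin d) ⊕ Fin N ⊕ Fin M → ℝ :=
  Sum.elim (fun kl => B kl.1 kl.2) (Sum.elim u v)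

theorem forall_couplingDual {P : ((Fin d × Fin d) ⊕ Fin N ⊕ Fin M → ℝ) → Prop} :
    (∀ y, P y) ↔ ∀ B u v, P (couplingDual B u v) := by
  refine ⟨fun h B u v => h _, fun h y => ?_⟩
  convert h (fun k l => y (.inl (k, l))) (y ∘ .inr ∘ .inl) (y ∘ .inr ∘ .inr)
  ext (⟨k, l⟩ | i | j) <;> rfl

theorem couplingColumn_dotProduct (Φ : Matrix (Fin N) (Fin d) ℝ) (Ψ : Matrix (Fin M) (Fin d) ℝ)
    (p : Fin N × Fin M) (B : Matrix (Fin d) (Fin d) ℝ) (u : Fin N → ℝ) (v : Fin M → ℝ) :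
    couplingColumn Φ Ψ p ⬝ᵥ couplingDual B u v = Φ p.1 ⬝ᵥ B *ᵥ Ψ p.2 + u p.1 + v p.2 := by
  rw [couplingColumn, couplingDual, sumElim_dotProduct_sumElim, sumElim_dotProduct_sumElim,
    single_one_dotProduct, single_one_dotProduct, add_assoc]
  congr 1
  simp only [dotProduct, mulVec, Fintype.sum_prod_type, Finset.mul_sum]
  exact Finset.sum_congr rfl fun k _ => Finset.sum_congr rfl fun l _ => by ring

theorem couplingTarget_dotProduct (α : Fin N → ℝ) (β : Fin M → ℝ)
    (B : Matrix (Fin d) (Fin d) ℝ) (u : Fin N → ℝ) (v : Fin M → ℝ) :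
    couplingTarget α β ⬝ᵥ couplingDual B u v = B.trace + u ⬝ᵥ α + v ⬝ᵥ β := by
  rw [couplingTarget, couplingDual, sumElim_dotProduct_sumElim, sumElim_dotProduct_sumElim,
    dotProduct_comm α, dotProduct_comm β, add_assoc]
  congr 1
  simp [dotProduct, trace, Fintype.sum_prod_type, one_apply]

theorem sum_smul_couplingColumn (Φ : Matrix (Fin N) (Fin d) ℝ) (Ψ : Matrix (Fin M) (Fin d) ℝ)
    (A : Matrix (Fin N) (Fin M) ℝ) :
    ∑ p : Fin N × Fin M, A p.1 p.2 • couplingColumn Φ Ψ p =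
      Sum.elim (fun kl => (Φᵀ * A * Ψ) kl.1 kl.2)
        (Sum.elim (fun i => ∑ j, A i j) (fun j => ∑ i, A i j)) := by
  ext (⟨k, l⟩ | i | j)
  · simp only [couplingColumn, Finset.sum_apply, Pi.smul_apply, Sum.elim_inl, smul_eq_mul,
      mul_apply, transpose_apply, Finset.sum_mul, Fintype.sum_prod_type]
    rw [Finset.sum_comm]
    exact Finset.sum_congr rfl fun i _ => Finset.sum_congr rfl fun j _ => by ring
  · simp [couplingColumn, Fintype.sum_prod_type, Pi.single_apply]
  · simp [couplingColumn, Fintype.sum_prod_type, Pi.single_apply]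

theorem sum_smul_couplingColumn_eq_couplingTarget_iff (Φ : Matrix (Fin N) (Fin d) ℝ)
    (Ψ : Matrix (Fin M) (Fin d) ℝ) (α : Fin N → ℝ) (β : Fin M → ℝ)
    (A : Matrix (Fin N) (Fin M) ℝ) :
    ∑ p : Fin N × Fin M, A p.1 p.2 • couplingColumn Φ Ψ p = couplingTarget α β ↔
      (∀ i, ∑ j, A i j = α i) ∧ (∀ j, ∑ i, A i j = β j) ∧ Φᵀ * A * Ψ = 1 := by
  simp only [sum_smul_couplingColumn, couplingTarget, funext_iff, Sum.forall, Sum.elim_inl,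
    Sum.elim_inr, Prod.forall, ← Matrix.ext_iff]
  tauto

end FrameCoupling

theorem stmt7_general {d N M : ℕ}
    (Φ : Matrix (Fin N) (Fin d) ℝ) (Ψ : Matrix (Fin M) (Fin d) ℝ)
    (α : Fin N → ℝ) (β : Fin M → ℝ) :
    (∃ A : Matrix (Fin N) (Fin M) ℝ,
      (∀ i j, 0 ≤ A i j) ∧ (∀ i, ∑ j, A i j = α i) ∧ (∀ j, ∑ i, A i j = β j) ∧
      Φᵀ * A * Ψ = 1) ↔
    ¬ ∃ (B : Matrix (Fin d) (Fin d) ℝ) (u : Fin N → ℝ) (v : Fin M → ℝ),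
      (∀ i j, 0 ≤ Φ i ⬝ᵥ B.mulVec (Ψ j) + u i + v j) ∧
      B.trace + u ⬝ᵥ α + v ⬝ᵥ β < 0 := by
  have hpos (p : Fin N × Fin M) : 0 < couplingColumn Φ Ψ p ⬝ᵥ couplingDual 0 1 1 := by
    rw [couplingColumn_dotProduct]
    norm_num
  calc _ ↔ ∃ t : Fin N × Fin M → ℝ, 0 ≤ t ∧
        ∑ p, t p • couplingColumn Φ Ψ p = couplingTarget α β := by
        simp only [← sum_smul_couplingColumn_eq_couplingTarget_iff]
        constructor
        · rintro ⟨A, hA, hsum⟩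
          exact ⟨fun p => A p.1 p.2, fun p => hA p.1 p.2, hsum⟩
        · rintro ⟨t, ht, hsum⟩
          exact ⟨of fun i j => t (i, j), fun i j => ht (i, j), hsum⟩
    _ ↔ _ := exists_nonneg_sum_smul_eq_iff _ _ hpos
    _ ↔ _ := by
        simp only [forall_couplingDual, couplingColumn_dotProduct, couplingTarget_dotProduct,
          Prod.forall, not_exists, not_and, not_lt]

/-- Farkas-type characterization of the existence of a "doubly stochastic" matrix
`A ∈ DS(α,β)` with `Φᵀ A Ψ = I`, for analysis matrices `Φ`, `Ψ` of two frames and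
positive weights `α`, `β` summing to one. -/
theorem stmt7 {d N M : ℕ}
    (Φ : Matrix (Fin N) (Fin d) ℝ) (Ψ : Matrix (Fin M) (Fin d) ℝ)
    (hΦ : Submodule.span ℝ (Set.range fun i => Φ i) = ⊤)
    (hΨ : Submodule.span ℝ (Set.range fun j => Ψ j) = ⊤)
    (α : Fin N → ℝ) (β : Fin M → ℝ)
    (hα : ∀ i, 0 < α i) (hβ : ∀ j, 0 < β j)
    (hαs : ∑ i, α i = 1) (hβs : ∑ j, β j = 1) :
    (∃ A : Matrix (Fin N) (Fin M) ℝ,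
      (∀ i j, 0 ≤ A i j) ∧ (∀ i, ∑ j, A i j = α i) ∧ (∀ j, ∑ i, A i j = β j) ∧
      Φᵀ * A * Ψ = 1) ↔
    ¬ ∃ (B : Matrix (Fin d) (Fin d) ℝ) (u : Fin N → ℝ) (v : Fin M → ℝ),
      (∀ i j, 0 ≤ Φ i ⬝ᵥ B.mulVec (Ψ j) + u i + v j) ∧
      B.trace + u ⬝ᵥ α + v ⬝ᵥ β < 0 :=
  stmt7_general Φ Ψ α β
end

section
/- Let {φᵢ}ᵢ₌₁^N and {ψᵢ}ᵢ₌₁^N be frames for ℝ^d with analysis matrices Φ, Ψ (rows φᵢ^T, ψᵢ^T). If Ψ†Φ has no negative eigenvalues and the set {(φᵢ, ψᵢ)}ᵢ₌₁^N is cyclically monotone, then for every t ∈ [0,1] the vectors {(1−t)φᵢ + tψᵢ}ᵢ₌₁^N span ℝ^d, i.e., the matrix (1−t)Φ + tΨ has rank d. -/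
/-!
If `((1 - t) Φ + t Ψ) v = 0` with `t < 1`, then `Φ v = c Ψ v` for `c = -t / (1 - t) ≤ 0`.
Applying the left inverse `Ψ† = (ΨᵀΨ)⁻¹Ψᵀ` of the injective `Ψ` gives `Ψ†Φ v = c v`: for `c < 0`
this makes `c` a negative eigenvalue of `Ψ†Φ` unless `v = 0`, and for `c = 0` it says `Φ v = 0`,
so `v = 0` because `Φ` is injective. At `t = 1` the matrix is `Ψ` itself.
-/

open Matrix

namespace Matrix

theorem mulVec_injective_iff_rank_eq {m n R : Type*} [Fintype n] [Field R] (A : Matrix m n R) :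
    Function.Injective A.mulVec ↔ A.rank = Fintype.card n := by
  change Function.Injective A.mulVecLin ↔ _
  rw [← LinearMap.ker_eq_bot, ← Submodule.finrank_eq_zero, rank,
    ← Module.finrank_fintype_fun_eq_card (R := R), ← A.mulVecLin.finrank_range_add_finrank_ker]
  omega

theorem mulVec_injective_of_span_row_eq_top {m n R : Type*} [Finite m] [Fintype n] [Field R]
    (A : Matrix m n R) (h : Submodule.span R (Set.range A.row) = ⊤) :
    Function.Injective A.mulVec := by
  rw [mulVec_injective_iff_rank_eq, rank_eq_finrank_span_row, h, finrank_top,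
    Module.finrank_fintype_fun_eq_card]

theorem isUnit_transpose_mul_self_of_mulVec_injective {m n R : Type*} [Fintype m] [Fintype n]
    [DecidableEq n] [Field R] [LinearOrder R] [IsStrictOrderedRing R] {A : Matrix m n R}
    (h : Function.Injective A.mulVec) : IsUnit (Aᵀ * A) := by
  rw [← mulVec_injective_iff_isUnit]
  change Function.Injective (Aᵀ * A).mulVecLin
  rw [← LinearMap.ker_eq_bot, ker_mulVecLin_transpose_mul_self, LinearMap.ker_eq_bot]
  exact h

theorem inv_transpose_mul_self_mul_transpose_mul_mulVec {m n R : Type*} [Fintype m] [Fintype n]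
    [DecidableEq n] [CommRing R] {A B : Matrix m n R} (hA : IsUnit (Aᵀ * A)) {v : n → R} {c : R}
    (h : B *ᵥ v = c • A *ᵥ v) : ((Aᵀ * A)⁻¹ * Aᵀ * B) *ᵥ v = c • v := by
  rw [← mulVec_mulVec, h, mulVec_smul, mulVec_mulVec, Matrix.mul_assoc,
    nonsing_inv_mul _ ((isUnit_iff_isUnit_det _).mp hA), one_mulVec]

theorem map_mulVec_comp_of_mulVec_eq_smul {n S T : Type*} [Fintype n] [CommSemiring S]
    [CommSemiring T] (f : S →+* T) {A : Matrix n n S} {v : n → S} {c : S} (h : A *ᵥ v = c • v) :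
    A.map f *ᵥ (f ∘ v) = f c • (f ∘ v) := by
  ext i
  rw [← RingHom.map_mulVec, h]
  simp

end Matrix

theorem eq_zero_of_mulVec_eq_nonpos_smul_mulVec {d N : ℕ} {Φ Ψ : Matrix (Fin N) (Fin d) ℝ}
    (hΦ : Submodule.span ℝ (Set.range fun i => Φ i) = ⊤)
    (hΨ : Submodule.span ℝ (Set.range fun i => Ψ i) = ⊤)
    (heig : ¬ ∃ (c : ℝ) (v : Fin d → ℂ), c < 0 ∧ v ≠ 0 ∧
      ((((Ψᵀ * Ψ)⁻¹ * Ψᵀ * Φ).map (algebraMap ℝ ℂ)).mulVec v = (c : ℂ) • v))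
    {v : Fin d → ℝ} {c : ℝ} (hc : c ≤ 0) (h : Φ *ᵥ v = c • Ψ *ᵥ v) : v = 0 := by
  rcases hc.lt_or_eq with hc | rfl
  · by_contra hv
    have hG := isUnit_transpose_mul_self_of_mulVec_injective
      (mulVec_injective_of_span_row_eq_top Ψ hΨ)
    refine heig ⟨c, algebraMap ℝ ℂ ∘ v, hc, ?_, map_mulVec_comp_of_mulVec_eq_smul _
      (inv_transpose_mul_self_mul_transpose_mul_mulVec hG h)⟩
    exact fun h0 => hv (funext fun i => by simpa using congrFun h0 i)
  · refine mulVec_injective_of_span_row_eq_top Φ hΦ ?_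
    rw [h, zero_smul, mulVec_zero]

theorem stmt11_general {d N : ℕ}
    (Φ Ψ : Matrix (Fin N) (Fin d) ℝ)
    (hΦ : Submodule.span ℝ (Set.range fun i => Φ i) = ⊤)
    (hΨ : Submodule.span ℝ (Set.range fun i => Ψ i) = ⊤)
    (heig : ¬ ∃ (c : ℝ) (v : Fin d → ℂ), c < 0 ∧ v ≠ 0 ∧
      ((((Ψᵀ * Ψ)⁻¹ * Ψᵀ * Φ).map (algebraMap ℝ ℂ)).mulVec v = (c : ℂ) • v))
    (t : ℝ) (ht0 : 0 ≤ t) (ht1 : t ≤ 1) :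
    ((1 - t) • Φ + t • Ψ).rank = d := by
  refine ((mulVec_injective_iff_rank_eq _).mp ?_).trans (Fintype.card_fin d)
  rcases ht1.lt_or_eq with hlt | rfl
  · rw [← coe_mulVecLin, ← LinearMap.ker_eq_bot, ker_mulVecLin_eq_bot_iff]
    intro v hv
    have h1t : 1 - t ≠ 0 := sub_ne_zero.mpr hlt.ne'
    refine eq_zero_of_mulVec_eq_nonpos_smul_mulVec hΦ hΨ heig
      (div_nonpos_of_nonpos_of_nonneg (neg_nonpos.mpr ht0) (sub_nonneg.mpr ht1)) ?_
    refine smul_right_injective _ h1t (?_ : (1 - t) • _ = (1 - t) • _)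
    rw [add_mulVec, smul_mulVec, smul_mulVec] at hv
    rw [smul_smul, mul_div_cancel₀ _ h1t, neg_smul, eq_neg_iff_add_eq_zero]
    exact hv
  · simpa using mulVec_injective_of_span_row_eq_top Ψ hΨ

/-- If `Ψ†Φ` has no negative real eigenvalues and `{(φᵢ, ψᵢ)}` is cyclically monotone,
then all convex combinations `(1−t)Φ + tΨ`, `t ∈ [0,1]`, have rank `d`; i.e., every measure
on the geodesic between the canonical probabilistic frames `μ_Φ` and `μ_Ψ` is a
probabilistic frame. -/
theorem stmt11 {d N : ℕ}
    (Φ Ψ : Matrix (Fin N) (Fin d) ℝ)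
    (hΦ : Submodule.span ℝ (Set.range fun i => Φ i) = ⊤)
    (hΨ : Submodule.span ℝ (Set.range fun i => Ψ i) = ⊤)
    (heig : ¬ ∃ (c : ℝ) (v : Fin d → ℂ), c < 0 ∧ v ≠ 0 ∧
      ((((Ψᵀ * Ψ)⁻¹ * Ψᵀ * Φ).map (algebraMap ℝ ℂ)).mulVec v = (c : ℂ) • v))
    (hmono : ∀ σ : Equiv.Perm (Fin N), ∑ i, Φ i ⬝ᵥ Ψ (σ i) ≤ ∑ i, Φ i ⬝ᵥ Ψ i)
    (t : ℝ) (ht0 : 0 ≤ t) (ht1 : t ≤ 1) :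
    ((1 - t) • Φ + t • Ψ).rank = d :=
  stmt11_general Φ Ψ hΦ hΨ heig t ht0 ht1
end

section
/- If {φᵢ}ᵢ₌₁^N is the canonical dual frame to a frame {ψᵢ}ᵢ₌₁^N for ℝ^d, i.e., φᵢ = S^{-1}ψᵢ with S = Σᵢ ψᵢψᵢ^T, then the set {(φᵢ, ψᵢ)}ᵢ₌₁^N is cyclically monotone: for every permutation σ of {1,…,N}, Σᵢ ⟨φᵢ, ψᵢ − ψ_{σ(i)}⟩ ≥ 0. -/
/-!
Write `B(u, v) = uᵀ S⁻¹ v`, a symmetric positive semidefinite form. For each `i`,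
`2 B(ψᵢ, ψᵢ - ψ_{σ(i)}) = B(ψᵢ - ψ_{σ(i)}, ψᵢ - ψ_{σ(i)}) + B(ψᵢ, ψᵢ) - B(ψ_{σ(i)}, ψ_{σ(i)})`.
Summed over `i`, the last two terms cancel because `σ` is a permutation, leaving a sum of
nonnegative quadratic terms.
-/

open Matrix

namespace Matrix

variable {ι n : Type*} [Fintype ι] [Fintype n]

theorem IsSymm.dotProduct_mulVec_comm {A : Matrix n n ℝ} (hA : A.IsSymm) (u v : n → ℝ) :
    u ⬝ᵥ A *ᵥ v = v ⬝ᵥ A *ᵥ u := by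
  rw [dotProduct_mulVec, ← mulVec_transpose, hA.eq, dotProduct_comm]

theorem IsSymm.two_mul_mulVec_dotProduct_sub {A : Matrix n n ℝ} (hA : A.IsSymm) (u v : n → ℝ) :
    2 * (A *ᵥ u ⬝ᵥ (u - v)) = (u - v) ⬝ᵥ A *ᵥ (u - v) + u ⬝ᵥ A *ᵥ u - v ⬝ᵥ A *ᵥ v := by
  rw [dotProduct_comm, mulVec_sub, sub_dotProduct, dotProduct_sub, sub_dotProduct, sub_dotProduct,
    hA.dotProduct_mulVec_comm v u]
  ring

theorem IsSymm.two_mul_sum_mulVec_dotProduct_sub_perm {A : Matrix n n ℝ} (hA : A.IsSymm)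
    (x : ι → n → ℝ) (σ : Equiv.Perm ι) :
    2 * ∑ i, A *ᵥ x i ⬝ᵥ (x i - x (σ i)) =
      ∑ i, (x i - x (σ i)) ⬝ᵥ A *ᵥ (x i - x (σ i)) := by
  simp only [Finset.mul_sum, hA.two_mul_mulVec_dotProduct_sub, Finset.sum_sub_distrib,
    Finset.sum_add_distrib, Equiv.sum_comp σ fun i => x i ⬝ᵥ A *ᵥ x i, add_sub_cancel_right]

theorem PosSemidef.sum_mulVec_dotProduct_sub_perm_nonneg {A : Matrix n n ℝ} (hA : A.PosSemidef)
    (x : ι → n → ℝ) (σ : Equiv.Perm ι) :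
    0 ≤ ∑ i, A *ᵥ x i ⬝ᵥ (x i - x (σ i)) := by
  have hquad : 0 ≤ 2 * ∑ i, A *ᵥ x i ⬝ᵥ (x i - x (σ i)) := by
    rw [(isHermitian_iff_isSymm.mp hA.isHermitian).two_mul_sum_mulVec_dotProduct_sub_perm]
    exact Finset.sum_nonneg fun i _ => by simpa using hA.dotProduct_mulVec_nonneg (x i - x (σ i))
  linarith

end Matrix

theorem stmt12_general {d N : ℕ}
    (Ψ : Matrix (Fin N) (Fin d) ℝ)
    (φ : Fin N → (Fin d → ℝ))
    (hφ : ∀ i, φ i = (Ψᵀ * Ψ)⁻¹.mulVec (Ψ i))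
    (σ : Equiv.Perm (Fin N)) :
    0 ≤ ∑ i, φ i ⬝ᵥ (Ψ i - Ψ (σ i)) := by
  have hS : (Ψᵀ * Ψ).PosSemidef := by simpa using posSemidef_conjTranspose_mul_self Ψ
  simpa only [hφ] using hS.inv.sum_mulVec_dotProduct_sub_perm_nonneg (fun i => Ψ i) σ

/-- The canonical dual frame pairs cyclically monotonically with the frame: if
`φᵢ = S⁻¹ψᵢ` with `S = Σᵢ ψᵢψᵢᵀ = ΨᵀΨ`, then for every permutation `σ`,
`Σᵢ ⟨φᵢ, ψᵢ − ψ_{σ(i)}⟩ ≥ 0`. -/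
theorem stmt12 {d N : ℕ}
    (Ψ : Matrix (Fin N) (Fin d) ℝ)
    (hΨ : Submodule.span ℝ (Set.range fun i => Ψ i) = ⊤)
    (φ : Fin N → (Fin d → ℝ))
    (hφ : ∀ i, φ i = (Ψᵀ * Ψ)⁻¹.mulVec (Ψ i))
    (σ : Equiv.Perm (Fin N)) :
    0 ≤ ∑ i, φ i ⬝ᵥ (Ψ i - Ψ (σ i)) :=
  stmt12_general Ψ φ hφ σ
end

section
/- If {φᵢ}ᵢ₌₁^N is the canonical dual frame of a frame {ψᵢ}ᵢ₌₁^N for ℝ^d, with analysis matrices Φ and Ψ, then Ψ†Φ = (Ψ^TΨ)^{-1}, which is positive definite; consequently (1−t)Φ + tΨ has rank d for every t ∈ [0,1]. -/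
open Matrix

/-! Since the rows of `Ψ` span `ℝ^d`, `Ψ` is injective, so `S = ΨᵀΨ` and `S⁻¹` are positive
definite. Then `(1 - t)Φ + tΨ = Ψ((1 - t)S⁻¹ + tI)`, and the second factor is a convex
combination of positive definite matrices, hence invertible, so the product has the rank `d`
of `Ψ`. -/

open scoped ComplexOrder in
theorem Matrix.convex_setOf_posDef {𝕜 n : Type*} [RCLike 𝕜] [Fintype n] :
    Convex ℝ {A : Matrix n n 𝕜 | A.PosDef} := by
  intro A hA B hB a b ha hb hab
  rcases ha.eq_or_lt with rfl | ha
  · simpa [show b = 1 by linarith] using hB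
  · exact (PosDef.smul hA ha).add_posSemidef (PosSemidef.smul hB.posSemidef hb)

theorem Matrix.mulVec_injective_of_span_row_eq_top_s14 {R m n : Type*} [CommRing R] [Fintype n]
    [DecidableEq n] {A : Matrix m n R} (hA : Submodule.span R (Set.range A.row) = ⊤) :
    Function.Injective A.mulVec := by
  rw [← coe_mulVecLin, ← LinearMap.ker_eq_bot, LinearMap.ker_eq_bot']
  intro x hx
  have horth : ∀ y ∈ Submodule.span R (Set.range A.row), y ⬝ᵥ x = 0 := by
    intro y hy
    induction hy using Submodule.span_induction with
    | mem _ hy => obtain ⟨i, rfl⟩ := hy; exact congr_fun hx i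
    | zero => exact zero_dotProduct x
    | add y z _ _ hy hz => rw [add_dotProduct, hy, hz, add_zero]
    | smul c y _ hy => rw [smul_dotProduct, hy, smul_zero]
  funext j
  simpa using horth (Pi.single j 1) (hA ▸ Submodule.mem_top)

theorem Matrix.rank_eq_card_of_mulVec_injective {R m n : Type*} [Field R] [Fintype n]
    {A : Matrix m n R} (hA : Function.Injective A.mulVec) : A.rank = Fintype.card n := by
  rw [rank, LinearMap.finrank_range_of_inj hA, Module.finrank_fintype_fun_eq_card]

/-- For the canonical dual pair `Φ = Ψ(ΨᵀΨ)⁻¹`, one has `Ψ†Φ = (ΨᵀΨ)⁻¹`, which is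
positive definite; consequently `(1−t)Φ + tΨ` has rank `d` for every `t ∈ [0,1]`. -/
theorem stmt14 {d N : ℕ}
    (Ψ : Matrix (Fin N) (Fin d) ℝ)
    (hΨ : Submodule.span ℝ (Set.range fun i => Ψ i) = ⊤)
    (Φ : Matrix (Fin N) (Fin d) ℝ)
    (hΦ : Φ = Ψ * (Ψᵀ * Ψ)⁻¹) :
    ((Ψᵀ * Ψ)⁻¹ * Ψᵀ) * Φ = (Ψᵀ * Ψ)⁻¹ ∧
    ((Ψᵀ * Ψ)⁻¹).PosDef ∧
    ∀ t : ℝ, 0 ≤ t → t ≤ 1 → ((1 - t) • Φ + t • Ψ).rank = d := by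
  have hinj : Function.Injective Ψ.mulVec := mulVec_injective_of_span_row_eq_top_s14 hΨ
  have hS : (Ψᵀ * Ψ).PosDef := by simpa using PosDef.conjTranspose_mul_self Ψ hinj
  refine ⟨?_, hS.inv, fun t ht0 ht1 => ?_⟩
  · rw [hΦ, Matrix.mul_assoc, ← Matrix.mul_assoc Ψᵀ,
      mul_nonsing_inv _ hS.det_pos.ne'.isUnit, Matrix.mul_one]
  · have hcomb : (1 - t) • Φ + t • Ψ = Ψ * ((1 - t) • (Ψᵀ * Ψ)⁻¹ + t • 1) := by
      rw [Matrix.mul_add, Matrix.mul_smul, Matrix.mul_smul, Matrix.mul_one, hΦ]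
    have hM : ((1 - t) • (Ψᵀ * Ψ)⁻¹ + t • (1 : Matrix (Fin d) (Fin d) ℝ)).PosDef :=
      convex_setOf_posDef hS.inv PosDef.one (sub_nonneg.2 ht1) ht0 (sub_add_cancel 1 t)
    rw [hcomb, rank_mul_eq_left_of_isUnit_det _ _ hM.det_pos.ne'.isUnit,
      rank_eq_card_of_mulVec_injective hinj, Fintype.card_fin]
end

section
/- Let {ψᵢ}ᵢ₌₁^N be a dual frame to a frame {φᵢ}ᵢ₌₁^N of unit vectors in ℝ^d with frame operator S_Φ. Set zᵢ = ψᵢ − S_Φ^{-1}φᵢ and a = min_{i≠j} ⟨φᵢ, S_Φ^{-1}(φᵢ − φⱼ)⟩. If max_j ‖zⱼ‖ ≤ a/N, then for every permutation σ, Σᵢ ⟨φᵢ, ψ_{σ(i)}⟩ ≤ Σᵢ ⟨φᵢ, ψᵢ⟩; i.e., the identity permutation is optimal for the discrete quadratic transport problem between the two uniformly weighted frames. -/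
open scoped RealInnerProductSpace

/-!
Writing `ψⱼ = zⱼ + S_Φ⁻¹φⱼ`, the identity beats every permutation already term by term:
`⟪φᵢ, ψᵢ - ψⱼ⟫ = ⟪φᵢ, S_Φ⁻¹(φᵢ - φⱼ)⟫ + ⟪φᵢ, zᵢ - zⱼ⟫ ≥ a - 2a/N ≥ 0`, since `‖φᵢ‖ = 1`
and two distinct indices force `N ≥ 2`.
-/

section PerturbedPairing

variable {E : Type*} [NormedAddCommGroup E] [InnerProductSpace ℝ E]

theorem abs_inner_le_of_norm_le {u w : E} {c : ℝ} (hu : ‖u‖ ≤ 1) (hw : ‖w‖ ≤ c) :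
    |⟪u, w⟫| ≤ c :=
  calc |⟪u, w⟫| ≤ ‖u‖ * ‖w‖ := abs_real_inner_le_norm u w
    _ ≤ 1 * c := mul_le_mul hu hw (norm_nonneg w) zero_le_one
    _ = c := one_mul c

theorem inner_add_apply_le_inner_add_apply (T : E →ₗ[ℝ] E) {u v w w' : E} {c : ℝ}
    (hu : ‖u‖ ≤ 1) (hw : ‖w‖ ≤ c) (hw' : ‖w'‖ ≤ c) (hgap : 2 * c ≤ ⟪u, T (u - v)⟫) :
    ⟪u, w' + T v⟫ ≤ ⟪u, w + T u⟫ := by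
  have hsplit : ⟪u, T (u - v)⟫ = ⟪u, T u⟫ - ⟪u, T v⟫ := by
    rw [map_sub, inner_sub_right]
  have hw_bound := abs_le.mp (abs_inner_le_of_norm_le hu hw)
  have hw'_bound := abs_le.mp (abs_inner_le_of_norm_le hu hw')
  rw [inner_add_right, inner_add_right]
  linarith [hw_bound.1, hw'_bound.2]

theorem sum_inner_perm_le_of_gap {ι : Type*} [Fintype ι] (T : E →ₗ[ℝ] E) (φ z : ι → E)
    {c : ℝ} (hφ : ∀ i, ‖φ i‖ ≤ 1) (hz : ∀ j, ‖z j‖ ≤ c)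
    (hgap : ∀ i j, i ≠ j → 2 * c ≤ ⟪φ i, T (φ i - φ j)⟫) (σ : Equiv.Perm ι) :
    ∑ i, ⟪φ i, z (σ i) + T (φ (σ i))⟫ ≤ ∑ i, ⟪φ i, z i + T (φ i)⟫ := by
  refine Finset.sum_le_sum fun i _ => ?_
  by_cases hi : σ i = i
  · rw [hi]
  · exact inner_add_apply_le_inner_add_apply T (hφ i) (hz i) (hz (σ i))
      (hgap i (σ i) (Ne.symm hi))

end PerturbedPairing

theorem two_mul_div_le_self {a : ℝ} {N : ℕ} (hN : 2 ≤ N) (h : 0 ≤ a / N) :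
    2 * (a / N) ≤ a := by
  have hN' : (2 : ℝ) ≤ N := by exact_mod_cast hN
  have hcancel : a / N * N = a := div_mul_cancel₀ a (by positivity)
  nlinarith

theorem stmt16_general {d N : ℕ}
    (φ ψ : Fin N → EuclideanSpace ℝ (Fin d))
    (hunit : ∀ i, ‖φ i‖ = 1)
    (S : Matrix (Fin d) (Fin d) ℝ)
    (z : Fin N → EuclideanSpace ℝ (Fin d))
    (hz : ∀ i, z i = ψ i - Matrix.toEuclideanLin S⁻¹ (φ i))
    (a : ℝ)
    (ha : IsLeast {r : ℝ | ∃ i j : Fin N, i ≠ j ∧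
      r = ⟪φ i, Matrix.toEuclideanLin S⁻¹ (φ i - φ j)⟫} a)
    (hsmall : ∀ j, ‖z j‖ ≤ a / N) :
    ∀ σ : Equiv.Perm (Fin N), ∑ i, ⟪φ i, ψ (σ i)⟫ ≤ ∑ i, ⟪φ i, ψ i⟫ := by
  intro σ
  obtain ⟨i₀, j₀, hij₀, -⟩ := ha.1
  have hN : 2 ≤ N := Fin.nontrivial_iff_two_le.mp ⟨⟨i₀, j₀, hij₀⟩⟩
  have hgap : ∀ i j, i ≠ j → 2 * (a / N) ≤ ⟪φ i, Matrix.toEuclideanLin S⁻¹ (φ i - φ j)⟫ :=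
    fun i j hij => (two_mul_div_le_self hN ((norm_nonneg _).trans (hsmall i₀))).trans
      (ha.2 ⟨i, j, hij, rfl⟩)
  have hψ : ∀ j, ψ j = z j + Matrix.toEuclideanLin S⁻¹ (φ j) :=
    fun j => sub_eq_iff_eq_add.mp (hz j).symm
  simp only [hψ]
  exact sum_inner_perm_le_of_gap _ φ z (fun i => (hunit i).le) hsmall hgap σ

/-- If a dual frame `{ψᵢ}` of a unit-norm frame `{φᵢ}` is close enough to the canonical
dual (each `zᵢ = ψᵢ − S_Φ⁻¹φᵢ` has norm at most `a/N`, where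
`a = min_{i≠j}⟨φᵢ, S_Φ⁻¹(φᵢ−φⱼ)⟩`), then the identity permutation is optimal for the
discrete quadratic transport problem: `Σᵢ ⟨φᵢ, ψ_{σ(i)}⟩ ≤ Σᵢ ⟨φᵢ, ψᵢ⟩` for all `σ`. -/
theorem stmt16 {d N : ℕ}
    (φ ψ : Fin N → EuclideanSpace ℝ (Fin d))
    (hunit : ∀ i, ‖φ i‖ = 1)
    (hspan : Submodule.span ℝ (Set.range φ) = ⊤)
    (hdualframe : ∀ x : EuclideanSpace ℝ (Fin d), ∑ i, ⟪x, φ i⟫ • ψ i = x)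
    (S : Matrix (Fin d) (Fin d) ℝ) (hS : S = fun i j => ∑ k, φ k i * φ k j)
    (z : Fin N → EuclideanSpace ℝ (Fin d))
    (hz : ∀ i, z i = ψ i - Matrix.toEuclideanLin S⁻¹ (φ i))
    (a : ℝ)
    (ha : IsLeast {r : ℝ | ∃ i j : Fin N, i ≠ j ∧
      r = ⟪φ i, Matrix.toEuclideanLin S⁻¹ (φ i - φ j)⟫} a)
    (hsmall : ∀ j, ‖z j‖ ≤ a / N) :
    ∀ σ : Equiv.Perm (Fin N), ∑ i, ⟪φ i, ψ (σ i)⟫ ≤ ∑ i, ⟪φ i, ψ i⟫ :=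
  stmt16_general φ ψ hunit S z hz a ha hsmall
end

section
/- Let μ₀ and μ₁ be absolutely continuous probabilistic frames on ℝ^d such that the optimal 2-Wasserstein transport map from μ₀ to μ₁ is linear, r(x) = Ax, with A positive semi-definite (no negative eigenvalues). Then for every t ∈ [0,1], the geodesic measure μ_t = ((1−t)id + tA)_# μ₀ has frame operator S_{μ_t} = ((1−t)I + tA) S_{μ₀} ((1−t)I + tA)^T, which is positive definite; hence μ_t is a probabilistic frame. -/
open MeasureTheory Matrix
open scoped RealInnerProductSpace

/-!
Pushing a measure forward by a matrix `M` conjugates its frame operator: `S_{M_# μ} = M S_μ Mᵀ`.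
For `t < 1` the matrix `(1 - t) I + t A` is positive definite because `A` is positive
semi-definite, so it preserves the positive definiteness of `S_{μ₀}`; at `t = 1` the geodesic
measure is `μ₁` itself, whose frame operator is positive definite by its lower frame bound.
-/

variable {ι : Type*}

noncomputable def frameMatrix (ν : Measure (EuclideanSpace ℝ ι)) : Matrix ι ι ℝ :=
  fun i j => ∫ x, x i * x j ∂ν

theorem frameMatrix_isHermitian (ν : Measure (EuclideanSpace ℝ ι)) :
    (frameMatrix ν).IsHermitian := by
  ext i j
  simp only [conjTranspose_apply, star_trivial, frameMatrix, mul_comm]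

section FrameMatrix

variable [Fintype ι] {ν : Measure (EuclideanSpace ℝ ι)}

theorem integrable_apply_mul_apply
    (h2 : Integrable (fun x : EuclideanSpace ℝ ι => ‖x‖ ^ 2) ν) (i j : ι) :
    Integrable (fun x : EuclideanSpace ℝ ι => x i * x j) ν := by
  refine h2.mono' (by fun_prop) (ae_of_all _ fun x => ?_)
  rw [norm_mul, sq]
  exact mul_le_mul (PiLp.norm_apply_le x i) (PiLp.norm_apply_le x j) (norm_nonneg _)
    (norm_nonneg _)

theorem integral_sum_sum_mul_apply_mul_apply
    (h2 : Integrable (fun x : EuclideanSpace ℝ ι => ‖x‖ ^ 2) ν)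
    (c : ι → ι → ℝ) :
    ∫ x, ∑ i, ∑ j, c i j * (x i * x j) ∂ν = ∑ i, ∑ j, c i j * frameMatrix ν i j := by
  have hint i j := (integrable_apply_mul_apply h2 i j).const_mul (c i j)
  rw [integral_finsetSum _ fun i _ => integrable_finsetSum _ fun j _ => hint i j]
  refine Finset.sum_congr rfl fun i _ => ?_
  rw [integral_finsetSum _ fun j _ => hint i j]
  exact Finset.sum_congr rfl fun j _ => integral_const_mul _ _

theorem dotProduct_frameMatrix_mulVec
    (h2 : Integrable (fun x : EuclideanSpace ℝ ι => ‖x‖ ^ 2) ν) (v : ι → ℝ) :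
    v ⬝ᵥ frameMatrix ν *ᵥ v = ∫ y, ⟪WithLp.toLp 2 v, y⟫ ^ 2 ∂ν := by
  have hsq (y : EuclideanSpace ℝ ι) :
      ⟪WithLp.toLp 2 v, y⟫ ^ 2 = ∑ i, ∑ j, v i * v j * (y i * y j) := by
    simp only [PiLp.inner_apply, RCLike.inner_apply, conj_trivial, sq, Finset.sum_mul_sum]
    exact Finset.sum_congr rfl fun i _ => Finset.sum_congr rfl fun j _ => by ring
  simp_rw [hsq, integral_sum_sum_mul_apply_mul_apply h2, dotProduct, mulVec, dotProduct,
    Finset.mul_sum]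
  exact Finset.sum_congr rfl fun i _ => Finset.sum_congr rfl fun j _ => by ring

theorem frameMatrix_map_toEuclideanLin [DecidableEq ι]
    (h2 : Integrable (fun x : EuclideanSpace ℝ ι => ‖x‖ ^ 2) ν) (M : Matrix ι ι ℝ) :
    frameMatrix (ν.map (toEuclideanLin M)) = M * frameMatrix ν * Mᵀ := by
  ext i j
  have hM : Measurable (toEuclideanLin M) :=
    (LinearMap.continuous_of_finiteDimensional _).measurable
  have hexpand (x : EuclideanSpace ℝ ι) : (toEuclideanLin M x) i * (toEuclideanLin M x) j
      = ∑ k, ∑ l, M i k * M j l * (x k * x l) := by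
    change (M *ᵥ x.ofLp) i * (M *ᵥ x.ofLp) j = _
    simp only [mulVec, dotProduct, Finset.sum_mul_sum]
    exact Finset.sum_congr rfl fun k _ => Finset.sum_congr rfl fun l _ => by ring
  rw [frameMatrix, integral_map hM.aemeasurable (by fun_prop)]
  simp_rw [hexpand, integral_sum_sum_mul_apply_mul_apply h2, mul_apply, transpose_apply,
    Finset.sum_mul]
  rw [Finset.sum_comm]
  exact Finset.sum_congr rfl fun k _ => Finset.sum_congr rfl fun l _ => by ring

theorem posDef_frameMatrix (h2 : Integrable (fun x : EuclideanSpace ℝ ι => ‖x‖ ^ 2) ν)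
    {a : ℝ} (ha : 0 < a) (hlower : ∀ x : EuclideanSpace ℝ ι, a * ‖x‖ ^ 2 ≤ ∫ y, ⟪x, y⟫ ^ 2 ∂ν) :
    (frameMatrix ν).PosDef := by
  refine .of_dotProduct_mulVec_pos (frameMatrix_isHermitian ν) fun v hv => ?_
  have hv' : WithLp.toLp 2 v ≠ 0 := by simpa using hv
  rw [star_trivial, dotProduct_frameMatrix_mulVec h2]
  exact (by positivity : 0 < a * ‖WithLp.toLp 2 v‖ ^ 2).trans_le (hlower _)

end FrameMatrix

theorem Matrix.PosDef.mul_mul_transpose_of_posDef [Fintype ι] [DecidableEq ι]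
    {S M : Matrix ι ι ℝ} (hS : S.PosDef) (hM : M.PosDef) : (M * S * Mᵀ).PosDef :=
  hS.mul_mul_conjTranspose_same (vecMul_injective_iff_isUnit.2 hM.isUnit)

theorem posDef_one_sub_smul_one_add_smul [DecidableEq ι] {A : Matrix ι ι ℝ} (hA : A.PosSemidef)
    {t : ℝ} (ht0 : 0 ≤ t) (ht1 : t < 1) : ((1 - t) • 1 + t • A).PosDef :=
  (PosDef.one.smul (sub_pos.2 ht1)).add_posSemidef (hA.smul ht0)

theorem stmt17_general {d : ℕ} (μ₀ μ₁ : Measure (EuclideanSpace ℝ (Fin d)))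
    (h₀2 : Integrable (fun x : EuclideanSpace ℝ (Fin d) => ‖x‖ ^ 2) μ₀)
    (h₁2 : Integrable (fun x : EuclideanSpace ℝ (Fin d) => ‖x‖ ^ 2) μ₁)
    (hframe₀ : ∃ A B : ℝ, 0 < A ∧ A ≤ B ∧ ∀ x : EuclideanSpace ℝ (Fin d),
      A * ‖x‖ ^ 2 ≤ (∫ y, ⟪x, y⟫ ^ 2 ∂μ₀) ∧ (∫ y, ⟪x, y⟫ ^ 2 ∂μ₀) ≤ B * ‖x‖ ^ 2)
    (hframe₁ : ∃ A B : ℝ, 0 < A ∧ A ≤ B ∧ ∀ x : EuclideanSpace ℝ (Fin d),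
      A * ‖x‖ ^ 2 ≤ (∫ y, ⟪x, y⟫ ^ 2 ∂μ₁) ∧ (∫ y, ⟪x, y⟫ ^ 2 ∂μ₁) ≤ B * ‖x‖ ^ 2)
    (A : Matrix (Fin d) (Fin d) ℝ) (hApsd : A.PosSemidef)
    (hpush : μ₁ = μ₀.map (Matrix.toEuclideanLin A))
    (S₀ : Matrix (Fin d) (Fin d) ℝ) (hS₀ : S₀ = fun i j => ∫ x, x i * x j ∂μ₀)
    (t : ℝ) (ht0 : 0 ≤ t) (ht1 : t ≤ 1)
    (μt : Measure (EuclideanSpace ℝ (Fin d)))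
    (hμt : μt = μ₀.map (Matrix.toEuclideanLin ((1 - t) • 1 + t • A)))
    (St : Matrix (Fin d) (Fin d) ℝ) (hSt : St = fun i j => ∫ x, x i * x j ∂μt) :
    St = ((1 - t) • 1 + t • A) * S₀ * ((1 - t) • 1 + t • A)ᵀ ∧ St.PosDef := by
  obtain ⟨a₀, _, ha₀, -, hlower₀⟩ := hframe₀
  obtain ⟨a₁, _, ha₁, -, hlower₁⟩ := hframe₁
  obtain rfl : S₀ = frameMatrix μ₀ := hS₀
  obtain rfl : St = frameMatrix μt := hSt
  have hconj := hμt ▸ frameMatrix_map_toEuclideanLin h₀2 ((1 - t) • 1 + t • A)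
  refine ⟨hconj, ?_⟩
  rcases ht1.lt_or_eq with ht1 | rfl
  · rw [hconj]
    exact (posDef_frameMatrix h₀2 ha₀ fun x => (hlower₀ x).1).mul_mul_transpose_of_posDef
      (posDef_one_sub_smul_one_add_smul hApsd ht0 ht1)
  · obtain rfl : μt = μ₁ := by simpa [hpush] using hμt
    exact posDef_frameMatrix h₁2 ha₁ fun x => (hlower₁ x).1

/-- If the optimal transport map between two absolutely continuous probabilistic frames is
linear and positive semi-definite, `r(x) = Ax`, then each geodesic measure
`μ_t = ((1−t)I + tA)_# μ₀` has frame operator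
`S_{μ_t} = ((1−t)I + tA) S_{μ₀} ((1−t)I + tA)ᵀ`, which is positive definite; hence `μ_t`
is a probabilistic frame. -/
theorem stmt17 {d : ℕ} (μ₀ μ₁ : Measure (EuclideanSpace ℝ (Fin d)))
    [IsProbabilityMeasure μ₀] [IsProbabilityMeasure μ₁]
    (hac₀ : μ₀ ≪ (volume : Measure (EuclideanSpace ℝ (Fin d))))
    (hac₁ : μ₁ ≪ (volume : Measure (EuclideanSpace ℝ (Fin d))))
    (h₀2 : Integrable (fun x : EuclideanSpace ℝ (Fin d) => ‖x‖ ^ 2) μ₀)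
    (h₁2 : Integrable (fun x : EuclideanSpace ℝ (Fin d) => ‖x‖ ^ 2) μ₁)
    (hframe₀ : ∃ A B : ℝ, 0 < A ∧ A ≤ B ∧ ∀ x : EuclideanSpace ℝ (Fin d),
      A * ‖x‖ ^ 2 ≤ (∫ y, ⟪x, y⟫ ^ 2 ∂μ₀) ∧ (∫ y, ⟪x, y⟫ ^ 2 ∂μ₀) ≤ B * ‖x‖ ^ 2)
    (hframe₁ : ∃ A B : ℝ, 0 < A ∧ A ≤ B ∧ ∀ x : EuclideanSpace ℝ (Fin d),
      A * ‖x‖ ^ 2 ≤ (∫ y, ⟪x, y⟫ ^ 2 ∂μ₁) ∧ (∫ y, ⟪x, y⟫ ^ 2 ∂μ₁) ≤ B * ‖x‖ ^ 2)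
    (A : Matrix (Fin d) (Fin d) ℝ) (hApsd : A.PosSemidef)
    (hpush : μ₁ = μ₀.map (Matrix.toEuclideanLin A))
    (hopt : ∀ γ' : Measure (EuclideanSpace ℝ (Fin d) × EuclideanSpace ℝ (Fin d)),
      γ'.map Prod.fst = μ₀ → γ'.map Prod.snd = μ₁ →
      (∫⁻ x, ENNReal.ofReal (‖x - Matrix.toEuclideanLin A x‖ ^ 2) ∂μ₀) ≤
        ∫⁻ p, ENNReal.ofReal (‖p.1 - p.2‖ ^ 2) ∂γ')
    (S₀ : Matrix (Fin d) (Fin d) ℝ) (hS₀ : S₀ = fun i j => ∫ x, x i * x j ∂μ₀)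
    (t : ℝ) (ht0 : 0 ≤ t) (ht1 : t ≤ 1)
    (μt : Measure (EuclideanSpace ℝ (Fin d)))
    (hμt : μt = μ₀.map (Matrix.toEuclideanLin ((1 - t) • 1 + t • A)))
    (St : Matrix (Fin d) (Fin d) ℝ) (hSt : St = fun i j => ∫ x, x i * x j ∂μt) :
    St = ((1 - t) • 1 + t • A) * S₀ * ((1 - t) • 1 + t • A)ᵀ ∧ St.PosDef :=
  stmt17_general μ₀ μ₁ h₀2 h₁2 hframe₀ hframe₁ A hApsd hpush S₀ hS₀ t ht0 ht1 μt hμt St hSt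
end
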